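/- arXiv:1807.02614 — 9 statements merged into one kernel-verified Lean document; each statement's English description precedes it below -/
import Mathlib

section
/- Let π be a probability distribution on a finite set S with π(x) > 0 for all x, let Q be a Markov kernel on S with Q(x,y) = 0 ⟺ Q(y,x) = 0, and let Γ: S × S → ℝ satisfy Γ(x,y) = −Γ(y,x) for all x,y, Σ_y Γ(x,y) = 0 for all x, and Γ(x,y) ≥ −π(y)Q(y,x) for all x,y. Define the non-reversible Metropolis–Hastings (NRMH) kernel P(x,y) = Q(x,y)·min(1, (Γ(x,y) + π(y)Q(y,x))/(π(x)Q(x,y))) for y ≠ x with π(x)Q(x,y) ≠ 0, P(x,y)=Q(x,y) if π(x)Q(x,y)=0, and P(x,x) = 1 − Σ_{y≠x} P(x,y). Then π is invariant for P, i.e. Σ_x π(x)P(x,y) = π(y) for all y. -/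
/-- the non-reversible Metropolis–Hastings (NRMH) kernel leaves the
target distribution π invariant. -/
theorem nrmh_invariance {S : Type*} [Fintype S] [DecidableEq S]
    (pi : S → ℝ) (Q Γ : S → S → ℝ) (P : Matrix S S ℝ)
    (hpipos : ∀ x, 0 < pi x) (hpisum : ∑ x, pi x = 1)
    (hQnn : ∀ x y, 0 ≤ Q x y) (hQrow : ∀ x, ∑ y, Q x y = 1)
    (hQsym : ∀ x y, Q x y = 0 ↔ Q y x = 0)
    (hΓskew : ∀ x y, Γ x y = - Γ y x)
    (hΓrow : ∀ x, ∑ y, Γ x y = 0)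
    (hΓlb : ∀ x y, -(pi y * Q y x) ≤ Γ x y)
    (hP1 : ∀ x y, x ≠ y → pi x * Q x y ≠ 0 →
      P x y = Q x y * min 1 ((Γ x y + pi y * Q y x) / (pi x * Q x y)))
    (hP2 : ∀ x y, x ≠ y → pi x * Q x y = 0 → P x y = Q x y)
    (hPdiag : ∀ x, P x x = 1 - ∑ y ∈ Finset.univ.filter (· ≠ x), P x y) :
    ∀ y, ∑ x, pi x * P x y = pi y := by
  -- Key: off-diagonal, π(x)P(x,y) = min(π(x)Q(x,y), Γ(x,y)+π(y)Q(y,x))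
  have key : ∀ x y, x ≠ y →
      pi x * P x y = min (pi x * Q x y) (Γ x y + pi y * Q y x) := by
    intro x y hxy
    by_cases h : pi x * Q x y = 0
    · have hQxy : Q x y = 0 := by
        rcases mul_eq_zero.mp h with h' | h'
        · exact absurd h' (hpipos x).ne'
        · exact h'
      have hQyx : Q y x = 0 := (hQsym x y).mp hQxy
      have hΓ1 : 0 ≤ Γ x y := by
        have := hΓlb x y; rw [hQyx] at this; simpa using this
      have hΓ2 : Γ x y ≤ 0 := by
        have := hΓlb y x; rw [hQxy] at this
        rw [hΓskew x y]; simpa using this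
      have hΓ0 : Γ x y = 0 := le_antisymm hΓ2 hΓ1
      rw [hP2 x y hxy h, hQxy, hΓ0, hQyx]
      simp
    · have hpos : 0 < pi x * Q x y :=
        lt_of_le_of_ne (mul_nonneg (hpipos x).le (hQnn x y)) (Ne.symm h)
      rw [hP1 x y hxy h, ← mul_assoc, mul_min_of_nonneg _ _ hpos.le,
        mul_one, mul_div_cancel₀ _ h]
  -- skew detailed balance
  have db : ∀ x y, x ≠ y → pi x * P x y = pi y * P y x + Γ x y := by
    intro x y hxy
    rw [key x y hxy, key y x hxy.symm, hΓskew y x]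
    set a := pi x * Q x y
    set b := pi y * Q y x
    rcases le_total a (Γ x y + b) with h | h
    · rw [min_eq_left h, min_eq_right (by linarith)]; ring
    · rw [min_eq_right h, min_eq_left (by linarith)]; ring
  intro y
  have hdiag : Γ y y = 0 := by
    have := hΓskew y y; linarith
  have hΓcol : ∑ x ∈ Finset.univ.erase y, Γ x y = 0 := by
    have h1 : ∑ x, Γ x y = 0 := by
      have : ∑ x, Γ x y = -∑ x, Γ y x := by
        rw [← Finset.sum_neg_distrib]
        exact Finset.sum_congr rfl fun x _ => by rw [hΓskew x y]
      rw [this, hΓrow y]; ring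
    have := Finset.add_sum_erase Finset.univ (fun x => Γ x y) (Finset.mem_univ y)
    rw [← this] at h1
    simpa [hdiag] using h1
  rw [← Finset.add_sum_erase Finset.univ _ (Finset.mem_univ y)]
  have hrest : ∑ x ∈ Finset.univ.erase y, pi x * P x y
      = ∑ x ∈ Finset.univ.erase y, (pi y * P y x + Γ x y) :=
    Finset.sum_congr rfl fun x hx => db x y (Finset.mem_erase.mp hx).1
  rw [hrest, Finset.sum_add_distrib, hΓcol, add_zero, ← Finset.mul_sum, ← mul_add]
  have hfe : Finset.univ.filter (· ≠ y) = Finset.univ.erase y := by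
    ext x; simp [Finset.mem_erase, and_comm]
  have : P y y + ∑ x ∈ Finset.univ.erase y, P y x = 1 := by
    rw [hPdiag y, hfe]; ring
  rw [this, mul_one]
end

section
/- Under the assumptions of the NRMH construction (Γ skew-symmetric with zero row sums, Γ(x,y) ≥ −π(y)Q(y,x), Q(x,y)=0 ⟺ Q(y,x)=0, π everywhere positive), the NRMH kernel P satisfies π(x)P(x,y) − π(y)P(y,x) = Γ(x,y) for all x ≠ y. In particular, P is π-reversible if and only if Γ = 0. -/
/-!
Writing `a = π(x)Q(x,y)`, `b = π(y)Q(y,x)` and `g = Γ(x,y)`, the flux `π(x)P(x,y)` equals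
`min a (g + b)` (for `a = 0` because `g + b ≥ 0`) and, by skew-symmetry,
`π(y)P(y,x) = min b (a - g)`. The second minimum is the first one shifted by `-g`, so the
difference of the fluxes is exactly `g`.
-/

theorem min_add_sub_min_sub {α : Type*} [AddCommGroup α] [LinearOrder α] [IsOrderedAddMonoid α]
    (a b g : α) : min a (g + b) - min b (a - g) = g := by
  have shift : min b (a - g) = min (g + b) a - g := by
    rw [← min_sub_sub_right, add_sub_cancel_left]
  rw [shift, min_comm, sub_sub_cancel]

theorem mul_eq_min_of_acceptance {w q p c : ℝ} (hw : 0 ≤ w) (hq : 0 ≤ q) (hc : 0 ≤ c)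
    (hpos : w * q ≠ 0 → p = q * min 1 (c / (w * q))) (hzero : w * q = 0 → p = q) :
    w * p = min (w * q) c := by
  by_cases h : w * q = 0
  · rw [hzero h, h, min_eq_left hc]
  · rw [hpos h, ← mul_assoc, mul_min_of_nonneg _ _ (mul_nonneg hw hq), mul_one,
      mul_div_cancel₀ _ h]

theorem nrmh_vorticity_identity_general {S : Type*}
    (pi : S → ℝ) (Q Γ : S → S → ℝ) (P : Matrix S S ℝ)
    (hpipos : ∀ x, 0 < pi x)
    (hQnn : ∀ x y, 0 ≤ Q x y)
    (hΓskew : ∀ x y, Γ x y = - Γ y x)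
    (hΓlb : ∀ x y, -(pi y * Q y x) ≤ Γ x y)
    (hP1 : ∀ x y, x ≠ y → pi x * Q x y ≠ 0 →
      P x y = Q x y * min 1 ((Γ x y + pi y * Q y x) / (pi x * Q x y)))
    (hP2 : ∀ x y, x ≠ y → pi x * Q x y = 0 → P x y = Q x y) :
    (∀ x y, x ≠ y → pi x * P x y - pi y * P y x = Γ x y) ∧
      ((∀ x y, pi x * P x y = pi y * P y x) ↔ (∀ x y, Γ x y = 0)) := by
  have flux : ∀ x y, x ≠ y → pi x * P x y = min (pi x * Q x y) (Γ x y + pi y * Q y x) :=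
    fun x y hxy => mul_eq_min_of_acceptance (hpipos x).le (hQnn x y)
      (neg_le_iff_add_nonneg.mp (hΓlb x y)) (hP1 x y hxy) (hP2 x y hxy)
  have vorticity : ∀ x y, x ≠ y → pi x * P x y - pi y * P y x = Γ x y := by
    intro x y hxy
    rw [flux x y hxy, flux y x hxy.symm, hΓskew y x, neg_add_eq_sub]
    exact min_add_sub_min_sub _ _ _
  have hΓdiag : ∀ x, Γ x x = 0 := fun x => by linarith [hΓskew x x]
  refine ⟨vorticity, fun hrev x y => ?_, fun hΓ0 x y => ?_⟩
  · rcases eq_or_ne x y with rfl | hxy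
    · exact hΓdiag x
    · rw [← vorticity x y hxy, hrev x y, sub_self]
  · rcases eq_or_ne x y with rfl | hxy
    · rfl
    · rw [← sub_eq_zero, vorticity x y hxy, hΓ0 x y]

/-- the NRMH kernel satisfies π(x)P(x,y) − π(y)P(y,x) = Γ(x,y) for
x ≠ y; in particular P is π-reversible iff Γ = 0. -/
theorem nrmh_vorticity_identity {S : Type*} [Fintype S] [DecidableEq S]
    (pi : S → ℝ) (Q Γ : S → S → ℝ) (P : Matrix S S ℝ)
    (hpipos : ∀ x, 0 < pi x) (hpisum : ∑ x, pi x = 1)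
    (hQnn : ∀ x y, 0 ≤ Q x y) (hQrow : ∀ x, ∑ y, Q x y = 1)
    (hQsym : ∀ x y, Q x y = 0 ↔ Q y x = 0)
    (hΓskew : ∀ x y, Γ x y = - Γ y x)
    (hΓrow : ∀ x, ∑ y, Γ x y = 0)
    (hΓlb : ∀ x y, -(pi y * Q y x) ≤ Γ x y)
    (hP1 : ∀ x y, x ≠ y → pi x * Q x y ≠ 0 →
      P x y = Q x y * min 1 ((Γ x y + pi y * Q y x) / (pi x * Q x y)))
    (hP2 : ∀ x y, x ≠ y → pi x * Q x y = 0 → P x y = Q x y)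
    (hPdiag : ∀ x, P x x = 1 - ∑ y ∈ Finset.univ.filter (· ≠ x), P x y) :
    (∀ x y, x ≠ y → pi x * P x y - pi y * P y x = Γ x y) ∧
      ((∀ x y, pi x * P x y = pi y * P y x) ↔ (∀ x y, Γ x y = 0)) :=
  nrmh_vorticity_identity_general pi Q Γ P hpipos hQnn hΓskew hΓlb hP1 hP2
end

section
/- Let π be a strictly positive probability on a finite set S, Q a proposal kernel with Q(x,y)=0 ⟺ Q(y,x)=0, and Γ a vorticity field satisfying skew-symmetry, zero row sums, and Γ(x,y) ≥ −π(y)Q(y,x) as well as −Γ(x,y) ≥ −π(y)Q(y,x) for all x,y. Let P_Γ and P_{−Γ} be the NRMH kernels with vorticity fields Γ and −Γ respectively. Then the mixture kernel R = (1/2)P_Γ + (1/2)P_{−Γ} is π-reversible: π(x)R(x,y) = π(y)R(y,x) for all x,y. -/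
private lemma nrmh_min_id (A B g : ℝ) :
    min A (g + B) + min A (-g + B) = min B (-g + A) + min B (g + A) := by
  simp only [min_def]
  split_ifs <;> linarith

private lemma nrmh_mul_min (A c : ℝ) (hA : 0 < A) :
    A * min 1 (c / A) = min A c := by
  rw [mul_min_of_nonneg _ _ hA.le, mul_one, mul_div_cancel₀ _ hA.ne']



/-- the equal-weight mixture of the NRMH kernels with vorticity
fields Γ and −Γ is π-reversible. -/
theorem nrmh_mixture_reversible {S : Type*} [Fintype S] [DecidableEq S]
    (pi : S → ℝ) (Q Γ : S → S → ℝ) (PG PmG : Matrix S S ℝ)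
    (hpipos : ∀ x, 0 < pi x) (hpisum : ∑ x, pi x = 1)
    (hQnn : ∀ x y, 0 ≤ Q x y) (hQrow : ∀ x, ∑ y, Q x y = 1)
    (hQsym : ∀ x y, Q x y = 0 ↔ Q y x = 0)
    (hΓskew : ∀ x y, Γ x y = - Γ y x)
    (hΓrow : ∀ x, ∑ y, Γ x y = 0)
    (hΓlb : ∀ x y, -(pi y * Q y x) ≤ Γ x y)
    (hΓub : ∀ x y, -(pi y * Q y x) ≤ -Γ x y)
    (hPG1 : ∀ x y, x ≠ y → pi x * Q x y ≠ 0 →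
      PG x y = Q x y * min 1 ((Γ x y + pi y * Q y x) / (pi x * Q x y)))
    (hPG2 : ∀ x y, x ≠ y → pi x * Q x y = 0 → PG x y = Q x y)
    (hPGdiag : ∀ x, PG x x = 1 - ∑ y ∈ Finset.univ.filter (· ≠ x), PG x y)
    (hPmG1 : ∀ x y, x ≠ y → pi x * Q x y ≠ 0 →
      PmG x y = Q x y * min 1 ((-Γ x y + pi y * Q y x) / (pi x * Q x y)))
    (hPmG2 : ∀ x y, x ≠ y → pi x * Q x y = 0 → PmG x y = Q x y)
    (hPmGdiag : ∀ x, PmG x x = 1 - ∑ y ∈ Finset.univ.filter (· ≠ x), PmG x y) :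
    ∀ x y, pi x * ((PG x y + PmG x y) / 2) = pi y * ((PG y x + PmG y x) / 2) := by
  intro x y
  rcases eq_or_ne x y with rfl | hxy
  · rfl
  rcases eq_or_ne (Q x y) 0 with h0 | h0
  · have h0' : Q y x = 0 := (hQsym x y).mp h0
    have e1 : PG x y = 0 := by rw [hPG2 x y hxy (by rw [h0, mul_zero])]; exact h0
    have e2 : PmG x y = 0 := by rw [hPmG2 x y hxy (by rw [h0, mul_zero])]; exact h0
    have e3 : PG y x = 0 := by rw [hPG2 y x hxy.symm (by rw [h0', mul_zero])]; exact h0'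
    have e4 : PmG y x = 0 := by rw [hPmG2 y x hxy.symm (by rw [h0', mul_zero])]; exact h0'
    rw [e1, e2, e3, e4]; ring
  · have h0' : Q y x ≠ 0 := fun h => h0 ((hQsym x y).mpr h)
    have hA : 0 < pi x * Q x y := mul_pos (hpipos x) ((hQnn x y).lt_of_ne (Ne.symm h0))
    have hB : 0 < pi y * Q y x := mul_pos (hpipos y) ((hQnn y x).lt_of_ne (Ne.symm h0'))
    have e1 : pi x * PG x y = min (pi x * Q x y) (Γ x y + pi y * Q y x) := by
      rw [hPG1 x y hxy hA.ne', ← mul_assoc, nrmh_mul_min _ _ hA]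
    have e2 : pi x * PmG x y = min (pi x * Q x y) (-Γ x y + pi y * Q y x) := by
      rw [hPmG1 x y hxy hA.ne', ← mul_assoc, nrmh_mul_min _ _ hA]
    have e3 : pi y * PG y x = min (pi y * Q y x) (-Γ x y + pi x * Q x y) := by
      rw [hPG1 y x hxy.symm hB.ne', ← mul_assoc, nrmh_mul_min _ _ hB, hΓskew y x]
    have e4 : pi y * PmG y x = min (pi y * Q y x) (Γ x y + pi x * Q x y) := by
      rw [hPmG1 y x hxy.symm hB.ne', ← mul_assoc, nrmh_mul_min _ _ hB, ← hΓskew x y]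
    have key := nrmh_min_id (pi x * Q x y) (pi y * Q y x) (Γ x y)
    field_simp
    rw [mul_add, mul_add, e1, e2, e3, e4]
    linarith
end

section
/- In the setting of the previous statement, the mixture kernel R = (1/2)P_Γ + (1/2)P_{−Γ} satisfies the Peskun ordering R(x,y) ≤ P_MH(x,y) for all x ≠ y, where P_MH is the standard Metropolis–Hastings kernel with the same proposal Q and target π. -/
/-! The acceptance probability `t ↦ min 1 t` is concave, so averaging the NRMH ratios
`(π(y)Q(y,x) ± Γ(x,y)) / (π(x)Q(x,y))`, whose mean is the Metropolis–Hastings ratio, can only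
lower the acceptance probability. -/

theorem min_add_min_sub_le_two_nsmul_min {α : Type*} [AddCommGroup α] [LinearOrder α]
    [IsOrderedAddMonoid α] (c a g : α) :
    min c (a + g) + min c (a - g) ≤ 2 • min c a :=
  calc min c (a + g) + min c (a - g) ≤ min (c + c) (a + g + (a - g)) :=
        min_add_min_le_min_add_add
    _ = 2 • min c a := by
        rw [add_add_sub_cancel, ← two_nsmul, ← two_nsmul]
        exact (Monotone.map_min (nsmul_right_mono 2)).symm

theorem nrmh_mixture_peskun_general {S : Type*}
    (pi : S → ℝ) (Q Γ : S → S → ℝ) (PG PmG PMH : Matrix S S ℝ)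
    (hQnn : ∀ x y, 0 ≤ Q x y)
    (hPG1 : ∀ x y, x ≠ y → pi x * Q x y ≠ 0 →
      PG x y = Q x y * min 1 ((Γ x y + pi y * Q y x) / (pi x * Q x y)))
    (hPG2 : ∀ x y, x ≠ y → pi x * Q x y = 0 → PG x y = Q x y)
    (hPmG1 : ∀ x y, x ≠ y → pi x * Q x y ≠ 0 →
      PmG x y = Q x y * min 1 ((-Γ x y + pi y * Q y x) / (pi x * Q x y)))
    (hPmG2 : ∀ x y, x ≠ y → pi x * Q x y = 0 → PmG x y = Q x y)
    (hPMH1 : ∀ x y, x ≠ y → pi x * Q x y ≠ 0 →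
      PMH x y = Q x y * min 1 ((pi y * Q y x) / (pi x * Q x y)))
    (hPMH2 : ∀ x y, x ≠ y → pi x * Q x y = 0 → PMH x y = Q x y) :
    ∀ x y, x ≠ y → (PG x y + PmG x y) / 2 ≤ PMH x y := by
  intro x y hxy
  by_cases hd : pi x * Q x y = 0
  · rw [hPG2 x y hxy hd, hPmG2 x y hxy hd, hPMH2 x y hxy hd, add_self_div_two]
  · rw [hPG1 x y hxy hd, hPmG1 x y hxy hd, hPMH1 x y hxy hd, ← mul_add, mul_div_assoc]
    have hconc := min_add_min_sub_le_two_nsmul_min 1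
      (pi y * Q y x / (pi x * Q x y)) (Γ x y / (pi x * Q x y))
    rw [← add_div, div_sub_div_same, nsmul_eq_mul, Nat.cast_ofNat] at hconc
    rw [add_comm (Γ x y), neg_add_eq_sub]
    exact mul_le_mul_of_nonneg_left (by linarith) (hQnn x y)

/-- Peskun ordering of off-diagonal entries: the equal-weight
mixture R = (P_Γ + P_{−Γ})/2 satisfies R(x,y) ≤ P_MH(x,y) for all x ≠ y, where
P_MH is the standard Metropolis–Hastings kernel with the same proposal and
target. -/
theorem nrmh_mixture_peskun {S : Type*} [Fintype S] [DecidableEq S]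
    (pi : S → ℝ) (Q Γ : S → S → ℝ) (PG PmG PMH : Matrix S S ℝ)
    (hpipos : ∀ x, 0 < pi x) (hpisum : ∑ x, pi x = 1)
    (hQnn : ∀ x y, 0 ≤ Q x y) (hQrow : ∀ x, ∑ y, Q x y = 1)
    (hQsym : ∀ x y, Q x y = 0 ↔ Q y x = 0)
    (hΓskew : ∀ x y, Γ x y = - Γ y x)
    (hΓrow : ∀ x, ∑ y, Γ x y = 0)
    (hΓlb : ∀ x y, -(pi y * Q y x) ≤ Γ x y)
    (hΓub : ∀ x y, -(pi y * Q y x) ≤ -Γ x y)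
    (hPG1 : ∀ x y, x ≠ y → pi x * Q x y ≠ 0 →
      PG x y = Q x y * min 1 ((Γ x y + pi y * Q y x) / (pi x * Q x y)))
    (hPG2 : ∀ x y, x ≠ y → pi x * Q x y = 0 → PG x y = Q x y)
    (hPGdiag : ∀ x, PG x x = 1 - ∑ y ∈ Finset.univ.filter (· ≠ x), PG x y)
    (hPmG1 : ∀ x y, x ≠ y → pi x * Q x y ≠ 0 →
      PmG x y = Q x y * min 1 ((-Γ x y + pi y * Q y x) / (pi x * Q x y)))
    (hPmG2 : ∀ x y, x ≠ y → pi x * Q x y = 0 → PmG x y = Q x y)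
    (hPmGdiag : ∀ x, PmG x x = 1 - ∑ y ∈ Finset.univ.filter (· ≠ x), PmG x y)
    (hPMH1 : ∀ x y, x ≠ y → pi x * Q x y ≠ 0 →
      PMH x y = Q x y * min 1 ((pi y * Q y x) / (pi x * Q x y)))
    (hPMH2 : ∀ x y, x ≠ y → pi x * Q x y = 0 → PMH x y = Q x y)
    (hPMHdiag : ∀ x, PMH x x = 1 - ∑ y ∈ Finset.univ.filter (· ≠ x), PMH x y) :
    ∀ x y, x ≠ y → (PG x y + PmG x y) / 2 ≤ PMH x y :=
  nrmh_mixture_peskun_general pi Q Γ PG PmG PMH hQnn hPG1 hPG2 hPmG1 hPmG2 hPMH1 hPMH2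
end

section
/- Let π be a strictly positive probability on a finite set S, Q a proposal kernel with Q(x,y)=0 ⟺ Q(y,x)=0, and Γ a vorticity field with Γ(x,y) = −Γ(y,x), Σ_y Γ(x,y) = 0, and ±Γ(x,y) ≥ −π(y)Q(y,x). Define A_{ξΓ}(x,y) = min(1, (ξΓ(x,y)+π(y)Q(y,x))/(π(x)Q(x,y))) when π(x)Q(x,y) > 0 and A_{ξΓ}(x,y) = 1 otherwise, for ξ ∈ {−1,1}. Then π(x)Q(x,y)A_{ξΓ}(x,y) = π(y)Q(y,x)A_{ξΓ}(y,x) + ξΓ(x,y) for all x, y with π(x)Q(x,y) > 0. -/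
/-- the key algebraic identity for lifted NRMH:
π(x)Q(x,y)·A_{ξΓ}(x,y) = π(y)Q(y,x)·A_{ξΓ}(y,x) + ξ·Γ(x,y) whenever
π(x)Q(x,y) > 0, for ξ ∈ {−1, 1}. -/
theorem nrmh_acceptance_identity {S : Type*} [Fintype S] [DecidableEq S]
    (pi : S → ℝ) (Q Γ : S → S → ℝ) (A : ℝ → S → S → ℝ)
    (hpipos : ∀ x, 0 < pi x) (hpisum : ∑ x, pi x = 1)
    (hQnn : ∀ x y, 0 ≤ Q x y) (hQrow : ∀ x, ∑ y, Q x y = 1)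
    (hQsym : ∀ x y, Q x y = 0 ↔ Q y x = 0)
    (hΓskew : ∀ x y, Γ x y = - Γ y x)
    (hΓrow : ∀ x, ∑ y, Γ x y = 0)
    (hΓlb : ∀ x y, -(pi y * Q y x) ≤ Γ x y)
    (hΓub : ∀ x y, -(pi y * Q y x) ≤ -Γ x y)
    (hA : ∀ (ξ : ℝ) (x y : S), A ξ x y =
      if 0 < pi x * Q x y then
        min 1 ((ξ * Γ x y + pi y * Q y x) / (pi x * Q x y)) else 1) :
    ∀ ξ : ℝ, (ξ = 1 ∨ ξ = -1) → ∀ x y : S, 0 < pi x * Q x y →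
      pi x * Q x y * A ξ x y = pi y * Q y x * A ξ y x + ξ * Γ x y := by
  intro ξ hξ x y hxy
  have hQxy : Q x y ≠ 0 := by
    intro h
    rw [h, mul_zero] at hxy
    exact lt_irrefl 0 hxy
  have hQyx : 0 < Q y x := lt_of_le_of_ne (hQnn y x)
    (fun h => hQxy ((hQsym x y).mpr h.symm))
  have hyx : 0 < pi y * Q y x := mul_pos (hpipos y) hQyx
  rw [hA, hA, if_pos hxy, if_pos hyx]
  rw [mul_min_of_nonneg _ _ hxy.le, mul_min_of_nonneg _ _ hyx.le,
    mul_div_cancel₀ _ hxy.ne', mul_div_cancel₀ _ hyx.ne', mul_one, mul_one,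
    hΓskew y x]
  have : min (pi y * Q y x) (ξ * - Γ x y + pi x * Q x y) + ξ * Γ x y
      = min (pi y * Q y x + ξ * Γ x y) (pi x * Q x y) := by
    rw [← min_add_add_right]; congr 1; ring
  rw [this, min_comm]
  ring_nf
end

section
/- Let π be a strictly positive probability on a finite set S, Q a π-reversible Markov kernel on S, Γ a skew-symmetric vorticity field with zero row sums satisfying ±Γ(x,y) ≥ −π(y)Q(y,x), and ρ ∈ [0,1]. Define on the lifted space S × {−1,1} the kernel K_ρ given by: from (x,ζ), propose y ∼ Q(x,·) and accept (y,ζ) with probability A_{ζΓ}(x,y); upon rejection stay at (x,ζ) with probability 1−ρ and move to (x,−ζ) with probability ρ. Then the probability π̃ on S × {−1,1} defined by π̃(x,ζ) = π(x)/2 is invariant for K_ρ. -/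
private lemma min_shift (a c : ℝ) : min a (a + c) = c + min a (a - c) := by
  rcases le_total c 0 with h | h
  · rw [min_eq_right (by linarith), min_eq_left (by linarith)]; ring
  · rw [min_eq_left (by linarith), min_eq_right (by linarith)]; ring

/-- the NRMHAV kernel K_ρ on the lifted space S × {−1,1}
(momentum encoded by `Bool`, with `true ↦ +1`, `false ↦ −1`) leaves
π̃(x,ζ) = π(x)/2 invariant, for any refreshment rate ρ ∈ [0,1]. -/
theorem nrmhav_invariance {S : Type*} [Fintype S] [DecidableEq S]
    (pi : S → ℝ) (Q Γ : S → S → ℝ) (A : ℝ → S → S → ℝ) (ρ : ℝ)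
    (K : Matrix (S × Bool) (S × Bool) ℝ)
    (hρ0 : 0 ≤ ρ) (hρ1 : ρ ≤ 1)
    (hpipos : ∀ x, 0 < pi x) (hpisum : ∑ x, pi x = 1)
    (hQnn : ∀ x y, 0 ≤ Q x y) (hQrow : ∀ x, ∑ y, Q x y = 1)
    (hQrev : ∀ x y, pi x * Q x y = pi y * Q y x)
    (hΓskew : ∀ x y, Γ x y = - Γ y x)
    (hΓrow : ∀ x, ∑ y, Γ x y = 0)
    (hΓlb : ∀ x y, -(pi y * Q y x) ≤ Γ x y)
    (hΓub : ∀ x y, -(pi y * Q y x) ≤ -Γ x y)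
    (hA : ∀ (ξ : ℝ) (x y : S), A ξ x y =
      if 0 < pi x * Q x y then
        min 1 ((ξ * Γ x y + pi y * Q y x) / (pi x * Q x y)) else 1)
    (hKmove : ∀ (x y : S) (ζ : Bool), y ≠ x →
      K (x, ζ) (y, ζ) = Q x y * A (if ζ then 1 else -1) x y)
    (hKstay : ∀ (x : S) (ζ : Bool),
      K (x, ζ) (x, ζ) =
        Q x x + (1 - ρ) * ∑ z, Q x z * (1 - A (if ζ then 1 else -1) x z))
    (hKflip : ∀ (x : S) (ζ : Bool),
      K (x, ζ) (x, !ζ) = ρ * ∑ z, Q x z * (1 - A (if ζ then 1 else -1) x z))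
    (hKzero : ∀ (x y : S) (ζ : Bool), y ≠ x → K (x, ζ) (y, !ζ) = 0) :
    ∀ (y : S) (η : Bool), ∑ p : S × Bool, (pi p.1 / 2) * K p (y, η) = pi y / 2 := by
  intro y η
  set ξ : ℝ := if η then 1 else -1 with hξdef
  have hΓdiag : ∀ x, Γ x x = 0 := fun x => by have := hΓskew x x; linarith
  have hΓcol : ∀ z : S, ∑ x, Γ x z = 0 := by
    intro z
    have h1 : ∑ x, Γ x z = -∑ x, Γ z x := by
      rw [← Finset.sum_neg_distrib]
      exact Finset.sum_congr rfl fun x _ => hΓskew x z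
    rw [h1, hΓrow, neg_zero]
  set F : ℝ → S → S → ℝ :=
    fun ξ' x z => min (pi x * Q x z) (pi x * Q x z + ξ' * Γ x z) with hFdef
  -- acceptance probability identity
  have hFA : ∀ (ξ' : ℝ) (x z : S), pi x * Q x z * A ξ' x z = F ξ' x z := by
    intro ξ' x z
    rw [hA]
    by_cases h : 0 < pi x * Q x z
    · rw [if_pos h, ← hQrev x z, mul_min_of_nonneg _ _ h.le, mul_one,
        mul_div_cancel₀ _ (ne_of_gt h)]
      rw [hFdef]
      ring_nf
    · rw [if_neg h]
      have ha : pi x * Q x z = 0 :=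
        le_antisymm (not_lt.1 h) (mul_nonneg (hpipos x).le (hQnn x z))
      have hb : pi z * Q z x = 0 := by rw [← hQrev x z]; exact ha
      have h1 := hΓlb x z
      have h2 := hΓub x z
      rw [hb] at h1 h2
      have hΓ0 : Γ x z = 0 := le_antisymm (by linarith) (by linarith)
      rw [hFdef]; simp [ha, hΓ0]
  -- skew-detailed balance
  have hFbal : ∀ (ξ' : ℝ) (x z : S), F ξ' x z = ξ' * Γ x z + F ξ' z x := by
    intro ξ' x z
    rw [hFdef]
    simp only
    rw [← hQrev x z, hΓskew z x]
    have := min_shift (pi x * Q x z) (ξ' * Γ x z)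
    rw [this]; ring_nf
  -- flip identity
  have hFneg : ∀ (ξ' : ℝ) (x z : S), F (-ξ') x z = F ξ' z x := by
    intro ξ' x z
    rw [hFdef]
    simp only
    rw [← hQrev x z, hΓskew z x]
    ring_nf
  have hFdiag : ∀ (ξ' : ℝ), F ξ' y y = pi y * Q y y := by
    intro ξ'; rw [hFdef]; simp [hΓdiag y]
  -- sums over a row equal sums over a column
  have hScol : ∀ (ξ' : ℝ), ∑ z, F ξ' z y = ∑ z, F ξ' y z := by
    intro ξ'
    calc ∑ z, F ξ' z y = ∑ z, (ξ' * Γ z y + F ξ' y z) :=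
          Finset.sum_congr rfl fun z _ => hFbal ξ' z y
      _ = ξ' * ∑ z, Γ z y + ∑ z, F ξ' y z := by
          rw [Finset.sum_add_distrib, Finset.mul_sum]
      _ = ∑ z, F ξ' y z := by rw [hΓcol, mul_zero, zero_add]
  have e3 : ∑ z, F (-ξ) y z = ∑ z, F ξ y z := by
    calc ∑ z, F (-ξ) y z = ∑ z, F ξ z y :=
          Finset.sum_congr rfl fun z _ => hFneg ξ y z
      _ = ∑ z, F ξ y z := hScol ξ
  -- rejection sums
  have e2 : ∀ (ξ' : ℝ), pi y * ∑ z, Q y z * (1 - A ξ' y z)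
      = pi y - ∑ z, F ξ' y z := by
    intro ξ'
    rw [Finset.mul_sum]
    have : ∀ z : S, pi y * (Q y z * (1 - A ξ' y z))
        = pi y * Q y z - F ξ' y z := by
      intro z
      have := hFA ξ' y z
      nlinarith [hFA ξ' y z]
    rw [Finset.sum_congr rfl fun z _ => this z, Finset.sum_sub_distrib,
      ← Finset.mul_sum, hQrow, mul_one]
  -- split the sum over the lifted space
  have hbool : ∀ g : Bool → ℝ, (∑ b : Bool, g b) = g η + g (!η) := by
    intro g; cases η <;> simp [add_comm]
  rw [Fintype.sum_prod_type]
  simp only [hbool]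
  rw [Finset.sum_add_distrib]
  have hxineg : (if (!η) = true then (1 : ℝ) else -1) = -ξ := by
    cases η <;> simp [hξdef]
  have hsum2 : ∑ x : S, pi x / 2 * K (x, !η) (y, η)
      = pi y / 2 * (ρ * ∑ z, Q y z * (1 - A (-ξ) y z)) := by
    rw [Finset.sum_eq_single y]
    · have h := hKflip y (!η)
      rw [Bool.not_not, hxineg] at h
      rw [h]
    · intro x _ hxy
      have h := hKzero x y (!η) (Ne.symm hxy)
      rw [Bool.not_not] at h
      rw [h, mul_zero]
    · intro h; exact absurd (Finset.mem_univ y) h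
  have hsum1 : ∑ x : S, pi x / 2 * K (x, η) (y, η)
      = ((∑ z, F ξ y z) - pi y * Q y y) / 2
        + pi y / 2 * (Q y y + (1 - ρ) * ∑ z, Q y z * (1 - A ξ y z)) := by
    rw [← Finset.sum_erase_add _ _ (Finset.mem_univ y)]
    have h1 : ∑ x ∈ Finset.univ.erase y, pi x / 2 * K (x, η) (y, η)
        = (∑ x ∈ Finset.univ.erase y, F ξ x y) / 2 := by
      rw [Finset.sum_div]
      refine Finset.sum_congr rfl fun x hx => ?_
      have hxy : x ≠ y := (Finset.mem_erase.1 hx).1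
      have h := hKmove x y η (Ne.symm hxy)
      rw [← hξdef] at h
      rw [h]
      have hfa := hFA ξ x y
      linarith
    have h2 : ∑ x ∈ Finset.univ.erase y, F ξ x y
        = (∑ z, F ξ y z) - pi y * Q y y := by
      have h := Finset.sum_erase_add Finset.univ (fun x => F ξ x y)
        (Finset.mem_univ y)
      have h' := hScol ξ
      have h'' := hFdiag ξ
      linarith
    have h3 := hKstay y η
    rw [← hξdef] at h3
    rw [h1, h2, h3]
    try ring
  rw [hsum1, hsum2]
  linear_combination ((1 - ρ) / 2) * e2 ξ + (ρ / 2) * e2 (-ξ) - (ρ / 2) * e3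
end

section
/- In the setting of the NRMHAV kernel K_ρ (finite state space, π strictly positive, Q π-reversible, Γ skew-symmetric with zero row sums and ±Γ(x,y) ≥ −π(y)Q(y,x)), K_ρ is π̃-reversible if and only if Γ = 0, where π̃(x,ζ) = π(x)/2. -/
/-- the NRMHAV kernel K_ρ on the lifted space S × {−1,1}
(momentum encoded by `Bool`, with `true ↦ +1`, `false ↦ −1`) is
π̃-reversible, with π̃(x,ζ) = π(x)/2, if and only if Γ = 0. -/
theorem nrmhav_reversible_iff {S : Type*} [Fintype S] [DecidableEq S]
    (pi : S → ℝ) (Q Γ : S → S → ℝ) (A : ℝ → S → S → ℝ) (ρ : ℝ)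
    (K : Matrix (S × Bool) (S × Bool) ℝ)
    (hρ0 : 0 ≤ ρ) (hρ1 : ρ ≤ 1)
    (hpipos : ∀ x, 0 < pi x) (hpisum : ∑ x, pi x = 1)
    (hQnn : ∀ x y, 0 ≤ Q x y) (hQrow : ∀ x, ∑ y, Q x y = 1)
    (hQrev : ∀ x y, pi x * Q x y = pi y * Q y x)
    (hΓskew : ∀ x y, Γ x y = - Γ y x)
    (hΓrow : ∀ x, ∑ y, Γ x y = 0)
    (hΓlb : ∀ x y, -(pi y * Q y x) ≤ Γ x y)
    (hΓub : ∀ x y, -(pi y * Q y x) ≤ -Γ x y)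
    (hA : ∀ (ξ : ℝ) (x y : S), A ξ x y =
      if 0 < pi x * Q x y then
        min 1 ((ξ * Γ x y + pi y * Q y x) / (pi x * Q x y)) else 1)
    (hKmove : ∀ (x y : S) (ζ : Bool), y ≠ x →
      K (x, ζ) (y, ζ) = Q x y * A (if ζ then 1 else -1) x y)
    (hKstay : ∀ (x : S) (ζ : Bool),
      K (x, ζ) (x, ζ) =
        Q x x + (1 - ρ) * ∑ z, Q x z * (1 - A (if ζ then 1 else -1) x z))
    (hKflip : ∀ (x : S) (ζ : Bool),
      K (x, ζ) (x, !ζ) = ρ * ∑ z, Q x z * (1 - A (if ζ then 1 else -1) x z))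
    (hKzero : ∀ (x y : S) (ζ : Bool), y ≠ x → K (x, ζ) (y, !ζ) = 0) :
    ((∀ (x : S) (ξ : Bool) (y : S) (η : Bool),
        pi x / 2 * K (x, ξ) (y, η) = pi y / 2 * K (y, η) (x, ξ)) ↔
      (∀ x y : S, Γ x y = 0)) := by
  constructor
  · intro hrev x y
    rcases eq_or_ne x y with rfl | hxy
    · have := hΓskew x x; linarith
    · have hc := hQrev x y
      rcases (mul_nonneg (hpipos x).le (hQnn x y)).lt_or_eq with hpos | h0
      · -- 0 < pi x * Q x y
        have hpos' : 0 < pi y * Q y x := hc ▸ hpos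
        have hq : 0 < Q x y := by nlinarith [hpipos x]
        have hq' : 0 < Q y x := by nlinarith [hpipos y]
        have h1 := hrev x true y true
        rw [hKmove x y true hxy.symm, hKmove y x true hxy] at h1
        simp only [if_true] at h1
        rw [hA 1 x y, hA 1 y x, if_pos hpos, if_pos hpos', hΓskew y x] at h1
        rcases le_or_gt (Γ x y) 0 with hg | hg
        · have hm1 : min 1 ((1 * Γ x y + pi y * Q y x) / (pi x * Q x y))
              = (1 * Γ x y + pi y * Q y x) / (pi x * Q x y) := by
            apply min_eq_right
            rw [div_le_one hpos]
            linarith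
          have hm2 : min 1 ((1 * -Γ x y + pi x * Q x y) / (pi y * Q y x)) = 1 := by
            apply min_eq_left
            rw [le_div_iff₀ hpos']
            linarith
          rw [hm1, hm2] at h1
          have hpx := (hpipos x).ne'
          have hpy := (hpipos y).ne'
          field_simp at h1
          nlinarith [hpipos x, hpipos y]
        · have hm1 : min 1 ((1 * Γ x y + pi y * Q y x) / (pi x * Q x y)) = 1 := by
            apply min_eq_left
            rw [le_div_iff₀ hpos]
            linarith
          have hm2 : min 1 ((1 * -Γ x y + pi x * Q x y) / (pi y * Q y x))
              = (1 * -Γ x y + pi x * Q x y) / (pi y * Q y x) := by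
            apply min_eq_right
            rw [div_le_one hpos']
            linarith
          rw [hm1, hm2] at h1
          have hpx := (hpipos x).ne'
          have hpy := (hpipos y).ne'
          field_simp at h1
          nlinarith [hpipos x, hpipos y]
      · -- pi x * Q x y = 0, so pi y * Q y x = 0 and bounds force Γ x y = 0
        have h0' : pi y * Q y x = 0 := by rw [← hc, ← h0]
        have hlb := hΓlb x y
        have hub := hΓub x y
        rw [h0'] at hlb hub
        linarith
  · intro hΓ0 x ξ y η
    have hAone : ∀ (s : ℝ) (a b : S), pi a * (Q a b * A s a b) = pi a * Q a b := by
      intro s a b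
      rw [hA]
      split_ifs with h
      · rw [hΓ0, mul_zero, zero_add, ← hQrev a b, div_self (ne_of_gt h), min_self,
          mul_one]
      · ring
    have hterm : ∀ (s : ℝ) (a z : S), Q a z * (1 - A s a z) = 0 := by
      intro s a z
      have h := hAone s a z
      have h' : Q a z * A s a z = Q a z := mul_left_cancel₀ (hpipos a).ne' h
      rw [mul_sub, mul_one, h', sub_self]
    have hflip : ∀ (ζ : Bool) (a : S), K (a, ζ) (a, !ζ) = 0 := by
      intro ζ a
      rw [hKflip]
      simp [hterm]
    have hmove : ∀ (ζ : Bool) (a b : S), b ≠ a →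
        pi a / 2 * K (a, ζ) (b, ζ) = pi b / 2 * K (b, ζ) (a, ζ) := by
      intro ζ a b hba
      rw [hKmove a b ζ hba, hKmove b a ζ hba.symm]
      have h1 := hAone (if ζ then 1 else -1) a b
      have h2 := hAone (if ζ then 1 else -1) b a
      have h3 := hQrev a b
      linarith
    rcases eq_or_ne y x with rfl | hyx
    · cases ξ <;> cases η
      · rfl
      · have h1 : K (y, false) (y, true) = 0 := hflip false y
        have h2 : K (y, true) (y, false) = 0 := hflip true y
        rw [h1, h2]
      · have h1 : K (y, false) (y, true) = 0 := hflip false y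
        have h2 : K (y, true) (y, false) = 0 := hflip true y
        rw [h1, h2]
      · rfl
    · cases ξ <;> cases η
      · exact hmove false x y hyx
      · have h1 : K (x, false) (y, true) = 0 := hKzero x y false hyx
        have h2 : K (y, true) (x, false) = 0 := hKzero y x true hyx.symm
        rw [h1, h2, mul_zero, mul_zero]
      · have h1 : K (x, true) (y, false) = 0 := hKzero x y true hyx
        have h2 : K (y, false) (x, true) = 0 := hKzero y x false hyx.symm
        rw [h1, h2, mul_zero, mul_zero]
      · exact hmove true x y hyx
end

section
/- Let S ≥ 4 be even and let π_ρ on the cycle {1,...,S} be given by π_ρ(x) ∝ 1 for x odd and π_ρ(x) ∝ ρ for x even, with 0 < ρ < 1. Consider the Guided Walk lifted chain on {1,...,S} × {−1,1}, proposing x → x+ξ on the cycle with Metropolis acceptance min(1, π_ρ(x+ξ)/π_ρ(x)) and flipping ξ on rejection. Then this chain is periodic with period 2: for every odd state k and every ξ ∈ {−1,1} and p ∈ ℕ, the probability of returning to (k,ξ) in an odd number 2p+1 of steps is 0, while the probability of being at (k,ξ) after some even number of steps is positive. In particular the chain is not ergodic: there exists an initial distribution μ such that ‖μ K^t − π̃‖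 does not converge to 0. -/
/-!
Give the lifted state `(x, ζ)` the parity `x + ζ ∈ ZMod 2`. A Metropolis move changes `x` by one
and keeps `ζ`, a rejection keeps `x` and flips `ζ`; on a cycle of even length both change the
parity. So the kernel is bipartite: `t` steps shift the parity by `t`, every odd return
probability vanishes, and started from `(0, true)` the chain at time `t` puts no mass on one of
`(0, true)`, `(0, false)`, which keeps its total variation distance to `π̃` at least
`π_ρ(0) / 4`. Even returns are positive because at an odd site both proposals are rejected with
probability `1 - ρ > 0`, so `(x, ζ) → (x, ¬ζ) → (x, ζ)` has positive probability.
-/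

open Filter Topology

namespace Matrix

variable {n R : Type*} [Fintype n] [Semiring R]

section Graded

variable [DecidableEq n] {G : Type*} [AddMonoid G] {A : Matrix n n R} {c : n → G} {g : G}

theorem grade_eq_of_pow_apply_ne_zero (hA : ∀ i j, A i j ≠ 0 → c j = c i + g) (k : ℕ)
    {i j : n} (h : (A ^ k) i j ≠ 0) : c j = c i + k • g := by
  induction k generalizing j with
  | zero =>
    obtain rfl : i = j := by_contra fun hij => h (one_apply_ne hij)
    simp
  | succ k ih =>
    rw [pow_succ, mul_apply] at h
    obtain ⟨l, -, hl⟩ := Finset.exists_ne_zero_of_sum_ne_zero h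
    rw [hA l j (right_ne_zero_of_mul hl), ih (left_ne_zero_of_mul hl), succ_nsmul, add_assoc]

theorem pow_apply_eq_zero_or_eq_zero (hA : ∀ i j, A i j ≠ 0 → c j = c i + g) (k : ℕ) (i : n)
    {j j' : n} (hc : c j ≠ c j') : (A ^ k) i j = 0 ∨ (A ^ k) i j' = 0 := by
  by_contra! h
  exact hc ((grade_eq_of_pow_apply_ne_zero hA k h.1).trans
    (grade_eq_of_pow_apply_ne_zero hA k h.2).symm)

theorem pow_odd_apply_self_eq_zero {c : n → ZMod 2} (hA : ∀ i j, A i j ≠ 0 → c j = c i + 1)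
    (p : ℕ) (i : n) : (A ^ (2 * p + 1)) i i = 0 := by
  by_contra h
  have hshift := grade_eq_of_pow_apply_ne_zero hA _ h
  rw [nsmul_one, Nat.cast_succ, Nat.cast_mul, show ((2 : ℕ) : ZMod 2) = 0 from rfl,
    zero_mul, zero_add, left_eq_add] at hshift
  exact one_ne_zero hshift

end Graded

variable [PartialOrder R] [IsOrderedRing R]

theorem le_mul_apply_of_nonneg {A B : Matrix n n R} (hA : ∀ i j, 0 ≤ A i j)
    (hB : ∀ i j, 0 ≤ B i j) (i l j : n) : A i l * B l j ≤ (A * B) i j :=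
  Finset.single_le_sum (f := fun l => A i l * B l j)
    (fun _ _ => mul_nonneg (hA _ _) (hB _ _)) (Finset.mem_univ l)

theorem pow_apply_self_pos [DecidableEq n] [PosMulStrictMono R] [Nontrivial R]
    {A : Matrix n n R} (hA : ∀ i j, 0 ≤ A i j) {i : n} (hi : 0 < A i i) (k : ℕ) :
    0 < (A ^ k) i i := by
  induction k with
  | zero => simp
  | succ k ih =>
    rw [pow_succ]
    exact (mul_pos ih hi).trans_le (le_mul_apply_of_nonneg (pow_apply_nonneg hA k) hA i i i)

end Matrix

theorem Fin.natCast_val_add_of_dvd {m n : ℕ} (h : m ∣ n) (x y : Fin n) :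
    (((x + y).val : ℕ) : ZMod m) = x.val + y.val := by
  rw [Fin.val_add, ← Nat.cast_add, ZMod.natCast_eq_natCast_iff', Nat.mod_mod_of_dvd _ h]

theorem Fin.natCast_val_one_of_dvd {m n : ℕ} [NeZero n] (h : m ∣ n) :
    (((1 : Fin n).val : ℕ) : ZMod m) = 1 := by
  rw [Fin.val_one', ← Nat.cast_one (R := ZMod m), ZMod.natCast_eq_natCast_iff',
    Nat.mod_mod_of_dvd _ h]

noncomputable def tvDistance {ι : Type*} [Fintype ι] (ν π : ι → ℝ) : ℝ :=
  1 / 2 * ∑ p, |ν p - π p|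

theorem abs_div_two_le_tvDistance_of_apply_eq_zero {ι : Type*} [Fintype ι] {ν π : ι → ℝ}
    {p : ι} (hp : ν p = 0) : |π p| / 2 ≤ tvDistance ν π := by
  have hle : |ν p - π p| ≤ ∑ q, |ν q - π q| :=
    Finset.single_le_sum (f := fun q => |ν q - π q|) (fun _ _ => abs_nonneg _)
      (Finset.mem_univ p)
  rw [hp, zero_sub, abs_neg] at hle
  unfold tvDistance
  linarith

namespace GuidedWalk

variable {S : ℕ} [NeZero S]

def proposal (x : Fin S) (ζ : Bool) : Fin S := if ζ then x + 1 else x - 1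

structure IsKernel (pi : Fin S → ℝ) (K : Matrix (Fin S × Bool) (Fin S × Bool) ℝ) :
    Prop where
  move : ∀ x ζ, K (x, ζ) (proposal x ζ, ζ) = min 1 (pi (proposal x ζ) / pi x)
  flip : ∀ x ζ, K (x, ζ) (x, !ζ) = 1 - min 1 (pi (proposal x ζ) / pi x)
  eq_zero : ∀ x ζ p, p ≠ (proposal x ζ, ζ) → p ≠ (x, !ζ) → K (x, ζ) p = 0

def parity (q : Fin S × Bool) : ZMod 2 := q.1.val + q.2.toNat

theorem natCast_val_proposal (h2 : 2 ∣ S) (x : Fin S) (ζ : Bool) :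
    (((proposal x ζ).val : ℕ) : ZMod 2) = x.val + 1 := by
  cases ζ with
  | true => exact (Fin.natCast_val_add_of_dvd h2 x 1).trans (by rw [Fin.natCast_val_one_of_dvd h2])
  | false =>
    have hx := Fin.natCast_val_add_of_dvd h2 (x - 1) 1
    rw [sub_add_cancel, Fin.natCast_val_one_of_dvd h2] at hx
    rw [proposal, if_neg Bool.false_ne_true, hx, add_assoc, CharTwo.add_self_eq_zero, add_zero]

variable {pi : Fin S → ℝ} {K : Matrix (Fin S × Bool) (Fin S × Bool) ℝ}

theorem IsKernel.parity_eq_of_ne_zero (hK : IsKernel pi K) (h2 : 2 ∣ S) {a q : Fin S × Bool}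
    (h : K a q ≠ 0) : parity q = parity a + 1 := by
  obtain ⟨x, ζ⟩ := a
  by_cases hmove : q = (proposal x ζ, ζ)
  · rw [hmove, parity, parity, natCast_val_proposal h2]
    ring
  by_cases hflip : q = (x, !ζ)
  · subst hflip
    cases ζ <;> simp [parity, add_assoc, CharTwo.add_self_eq_zero]
  exact absurd (hK.eq_zero x ζ q hmove hflip) h

theorem IsKernel.nonneg (hK : IsKernel pi K) (hpi : ∀ x, 0 < pi x) (a q : Fin S × Bool) :
    0 ≤ K a q := by
  obtain ⟨x, ζ⟩ := a
  by_cases hmove : q = (proposal x ζ, ζ)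
  · rw [hmove, hK.move]
    exact le_min zero_le_one (div_pos (hpi _) (hpi x)).le
  by_cases hflip : q = (x, !ζ)
  · rw [hflip, hK.flip, sub_nonneg]
    exact min_le_left _ _
  exact (hK.eq_zero x ζ q hmove hflip).ge

theorem IsKernel.flip_pos (hK : IsKernel pi K) {x : Fin S} {ζ : Bool} (hx : 0 < pi x)
    (hlt : pi (proposal x ζ) < pi x) : 0 < K (x, ζ) (x, !ζ) := by
  have hratio := (div_lt_one hx).2 hlt
  rw [hK.flip, min_eq_right hratio.le]
  exact sub_pos.2 hratio

theorem IsKernel.sq_apply_self_pos (hK : IsKernel pi K) (hpi : ∀ x, 0 < pi x) {x : Fin S}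
    (hlt : ∀ ζ, pi (proposal x ζ) < pi x) (ζ : Bool) : 0 < (K ^ 2) (x, ζ) (x, ζ) := by
  have hback : 0 < K (x, !ζ) (x, ζ) := by simpa using hK.flip_pos (hpi x) (hlt !ζ)
  rw [sq]
  exact (mul_pos (hK.flip_pos (hpi x) (hlt ζ)) hback).trans_le
    (Matrix.le_mul_apply_of_nonneg (hK.nonneg hpi) (hK.nonneg hpi) _ _ _)

theorem IsKernel.div_four_le_tvDistance_pow (hK : IsKernel pi K) (h2 : 2 ∣ S) {x : Fin S}
    (hx : 0 ≤ pi x) (t : ℕ) (ζ : Bool) :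
    pi x / 4 ≤ tvDistance ((K ^ t) (x, ζ)) (fun p => pi p.1 / 2) := by
  have hstep : ∀ a q, K a q ≠ 0 → parity q = parity a + 1 :=
    fun _ _ => hK.parity_eq_of_ne_zero h2
  have habs : |pi x / 2| / 2 = pi x / 4 := by
    rw [abs_of_nonneg (by positivity)]
    ring
  rcases Matrix.pow_apply_eq_zero_or_eq_zero hstep t (x, ζ) (j := (x, true)) (j' := (x, false))
    (by simp [parity]) with h | h <;>
  · exact habs ▸ abs_div_two_le_tvDistance_of_apply_eq_zero
      (π := fun p : Fin S × Bool => pi p.1 / 2) h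

end GuidedWalk

open GuidedWalk

section RuggedTarget

noncomputable def ruggedTarget (S : ℕ) (ρ : ℝ) (k : Fin S) : ℝ :=
  (if k.val % 2 = 0 then 1 else ρ) / ((S : ℝ) / 2 * (1 + ρ))

variable {S : ℕ} [NeZero S] {ρ : ℝ}

theorem ruggedTarget_normalizer_pos (hρ : 0 < ρ) : 0 < (S : ℝ) / 2 * (1 + ρ) := by
  have : (0 : ℝ) < S := Nat.cast_pos.2 (Nat.pos_of_neZero S)
  positivity

theorem ruggedTarget_pos (hρ : 0 < ρ) (k : Fin S) : 0 < ruggedTarget S ρ k := by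
  have := ruggedTarget_normalizer_pos (S := S) hρ
  unfold ruggedTarget
  split_ifs <;> positivity

theorem ruggedTarget_proposal_lt (h2 : 2 ∣ S) (hρ0 : 0 < ρ) (hρ1 : ρ < 1) {k : Fin S}
    (hk : k.val % 2 = 0) (ζ : Bool) : ruggedTarget S ρ (proposal k ζ) < ruggedTarget S ρ k := by
  have hodd : (proposal k ζ).val % 2 ≠ 0 := by
    intro h
    have hcast := natCast_val_proposal h2 k ζ
    rw [ZMod.natCast_eq_zero_iff_even.2 (Nat.even_iff.2 h),
      ZMod.natCast_eq_zero_iff_even.2 (Nat.even_iff.2 hk), zero_add] at hcast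
    exact zero_ne_one hcast
  unfold ruggedTarget
  rw [if_neg hodd, if_pos hk]
  exact div_lt_div_of_pos_right hρ1 (ruggedTarget_normalizer_pos hρ0)

end RuggedTarget

/-- A site `k ∈ {1,…,S}` is encoded by `i : Fin S` with `i.val = k − 1`, so odd sites are
those with `i.val % 2 = 0`; momentum `+1` is `true` and `−1` is `false`. -/
theorem guided_walk_periodic_not_ergodic_general (S : ℕ) (heven : S % 2 = 0)
    [NeZero S] (ρ : ℝ) (hρ0 : 0 < ρ) (hρ1 : ρ < 1)
    (pi : Fin S → ℝ)
    (hpi : ∀ k : Fin S,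
      pi k = (if k.val % 2 = 0 then 1 else ρ) / ((S : ℝ) / 2 * (1 + ρ)))
    (K : Matrix (Fin S × Bool) (Fin S × Bool) ℝ)
    (hKacc : ∀ (x : Fin S) (ζ : Bool),
      K (x, ζ) ((if ζ then x + 1 else x - 1), ζ) =
        min 1 (pi (if ζ then x + 1 else x - 1) / pi x))
    (hKflip : ∀ (x : Fin S) (ζ : Bool),
      K (x, ζ) (x, !ζ) = 1 - min 1 (pi (if ζ then x + 1 else x - 1) / pi x))
    (hKzero : ∀ (x : Fin S) (ζ : Bool) (p : Fin S × Bool),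
      p ≠ ((if ζ then x + 1 else x - 1), ζ) → p ≠ (x, !ζ) → K (x, ζ) p = 0) :
    (∀ k : Fin S, k.val % 2 = 0 → ∀ (ζ : Bool) (p : ℕ),
        (K ^ (2 * p + 1)) (k, ζ) (k, ζ) = 0) ∧
    (∀ k : Fin S, k.val % 2 = 0 → ∀ (ζ : Bool) (p : ℕ),
        0 < (K ^ (2 * p)) (k, ζ) (k, ζ)) ∧
    (∃ μ : Fin S × Bool → ℝ, (∀ q, 0 ≤ μ q) ∧ (∑ q, μ q = 1) ∧
      ¬ Filter.Tendsto
          (fun t : ℕ => (1 / 2) * ∑ p : Fin S × Bool,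
            |(∑ q, μ q * (K ^ t) q p) - pi p.1 / 2|)
          Filter.atTop (nhds 0)) := by
  have h2 : 2 ∣ S := Nat.dvd_of_mod_eq_zero heven
  obtain rfl : pi = ruggedTarget S ρ := funext hpi
  have hK : IsKernel (ruggedTarget S ρ) K := ⟨hKacc, hKflip, hKzero⟩
  have hpos := ruggedTarget_pos (S := S) hρ0
  have hstep : ∀ a q, K a q ≠ 0 → parity q = parity a + 1 :=
    fun _ _ => hK.parity_eq_of_ne_zero h2
  refine ⟨fun k _ ζ p => Matrix.pow_odd_apply_self_eq_zero hstep p _, fun k hk ζ p => ?_,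
    Pi.single (0, true) 1, fun q => by rw [Pi.single_apply]; split_ifs <;> norm_num, by simp, ?_⟩
  · rw [pow_mul]
    exact Matrix.pow_apply_self_pos (Matrix.pow_apply_nonneg (hK.nonneg hpos) 2)
      (hK.sq_apply_self_pos hpos (ruggedTarget_proposal_lt h2 hρ0 hρ1 hk) ζ) p
  · have hgap (t : ℕ) : ruggedTarget S ρ 0 / 4 ≤ tvDistance
        (Matrix.vecMul (Pi.single (0, true) 1) (K ^ t)) (fun p => ruggedTarget S ρ p.1 / 2) := by
      rw [Matrix.single_one_vecMul]
      exact hK.div_four_le_tvDistance_pow h2 (hpos 0).le t true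
    exact fun h => (ge_of_tendsto' h hgap).not_gt (by positivity [hpos 0])

/-- the Guided Walk on the cycle {1,…,S} (S even, S ≥ 4) with
rugged target π_ρ(odd) ∝ 1, π_ρ(even) ∝ ρ (0 < ρ < 1) is 2-periodic and hence
not ergodic.  State k ∈ {1,…,S} is encoded by `i : Fin S` with `i.val = k − 1`,
so an odd state k corresponds to `i.val % 2 = 0`; momentum +1 is `true`, −1 is
`false`, and π̃(x,ξ) = π_ρ(x)/2 on the lifted space. -/
theorem guided_walk_periodic_not_ergodic (S : ℕ) (hS : 4 ≤ S) (heven : S % 2 = 0)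
    [NeZero S] (ρ : ℝ) (hρ0 : 0 < ρ) (hρ1 : ρ < 1)
    (pi : Fin S → ℝ)
    (hpi : ∀ k : Fin S,
      pi k = (if k.val % 2 = 0 then 1 else ρ) / ((S : ℝ) / 2 * (1 + ρ)))
    (K : Matrix (Fin S × Bool) (Fin S × Bool) ℝ)
    (hKacc : ∀ (x : Fin S) (ζ : Bool),
      K (x, ζ) ((if ζ then x + 1 else x - 1), ζ) =
        min 1 (pi (if ζ then x + 1 else x - 1) / pi x))
    (hKflip : ∀ (x : Fin S) (ζ : Bool),
      K (x, ζ) (x, !ζ) = 1 - min 1 (pi (if ζ then x + 1 else x - 1) / pi x))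
    (hKzero : ∀ (x : Fin S) (ζ : Bool) (p : Fin S × Bool),
      p ≠ ((if ζ then x + 1 else x - 1), ζ) → p ≠ (x, !ζ) → K (x, ζ) p = 0) :
    (∀ k : Fin S, k.val % 2 = 0 → ∀ (ζ : Bool) (p : ℕ),
        (K ^ (2 * p + 1)) (k, ζ) (k, ζ) = 0) ∧
    (∀ k : Fin S, k.val % 2 = 0 → ∀ (ζ : Bool) (p : ℕ),
        0 < (K ^ (2 * p)) (k, ζ) (k, ζ)) ∧
    (∃ μ : Fin S × Bool → ℝ, (∀ q, 0 ≤ μ q) ∧ (∑ q, μ q = 1) ∧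
      ¬ Filter.Tendsto
          (fun t : ℕ => (1 / 2) * ∑ p : Fin S × Bool,
            |(∑ q, μ q * (K ^ t) q p) - pi p.1 / 2|)
          Filter.atTop (nhds 0)) :=
  guided_walk_periodic_not_ergodic_general S heven ρ hρ0 hρ1 pi hpi K hKacc hKflip hKzero
end

section
/- Let S ≥ 5 be odd and π(k) = 2k/(S(S+1)) on the cycle {1,...,S}, with the Metropolis–Hastings chain using nearest-neighbour proposal Q(x,y)=1/2. The conductance h(P) := min over A with π(A) < 1/2 of (Σ_{x∈A} π(x)P(x,Aᶜ))/π(A) satisfies (1 + √(1 + 2S(S+1)))/(S(S+1)) ≤ h(P) ≤ 2/(S+1). -/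
/-!
For neighbours `x, y` the Metropolis–Hastings flow is `π x * P x y = min (π x) (π y) / 2`, so the
flow out of `A` is `F(A) / (S(S+1))`, where `F(A)` is the cut of `A` in the cycle whose edge
`{k, k+1}` has weight `k` and whose edge `{S, 1}` has weight `1`; likewise `π(A) = W(A) / (S(S+1))`
with `W(A) = ∑_{k ∈ A} 2k`.

Isoperimetry: `W(A) ≤ F(A) (F(A) - 1)` for every `A` not containing `S`. Add the states of `A`
in increasing order: a new state `k` adjacent to the previous one raises `F` by exactly one, an
isolated one raises it by at least `k + 1`. If `S ∈ A` and `π(A) < 1/2`, apply this to `Aᶜ`,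
which has the same cut and larger mass. With `r = √(1 + 2S(S+1))`, the constraint
`2W < S(S+1) = (r² - 1)/2` turns `W ≤ F(F - 1)` into `2W ≤ F(r - 1)`, which is the lower bound.
The arc `{1, …, (S+1)/2}` has `F = (S+3)/2` and `W = (S+1)(S+3)/4`, giving the upper bound.
-/

open Finset

lemma one_add_sqrt_div_le_div {N F W : ℝ} (hN : 0 < N) (hF : 0 ≤ F) (hW : 0 < W)
    (hWF : W ≤ F * (F - 1)) (hWN : 2 * W < N) : (1 + √(1 + 2 * N)) / N ≤ F / W := by
  set r := √(1 + 2 * N)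
  have hr2 : r ^ 2 = 1 + 2 * N := Real.sq_sqrt (by linarith)
  have hr1 : 1 ≤ r := Real.one_le_sqrt.mpr (by linarith)
  have hkey : 2 * W ≤ F * (r - 1) := by
    rcases le_or_gt (2 * F - 1) r with h | h
    · nlinarith
    · nlinarith [mul_le_mul_of_nonneg_left h.le (sub_nonneg.mpr hr1)]
  rw [div_le_div_iff₀ hN hW]
  nlinarith

lemma le_sInf_and_sInf_le {ι : Type*} {p q : ι → Prop} {f : ι → ℝ} {a b : ℝ}
    (hlow : ∀ i, p i → q i → a ≤ f i) {i₀ : ι} (hp : p i₀) (hq : q i₀) (hb : f i₀ ≤ b) :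
    a ≤ sInf {r | ∃ i, p i ∧ q i ∧ r = f i} ∧ sInf {r | ∃ i, p i ∧ q i ∧ r = f i} ≤ b := by
  have hmem : f i₀ ∈ {r | ∃ i, p i ∧ q i ∧ r = f i} := ⟨i₀, hp, hq, rfl⟩
  have hlow' : a ∈ lowerBounds {r | ∃ i, p i ∧ q i ∧ r = f i} := by
    rintro r ⟨i, hpi, hqi, rfl⟩
    exact hlow i hpi hqi
  exact ⟨le_csInf ⟨_, hmem⟩ hlow', (csInf_le ⟨a, hlow'⟩ hmem).trans hb⟩

namespace MHCycle

variable {S : ℕ}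

-- `x : Fin S` is the state `x.val + 1`, and `π = 2 * linWeight / (S * (S + 1))`.
def linWeight (x : Fin S) : ℝ := x.val + 1

def linMass (A : Finset (Fin S)) : ℝ := ∑ x ∈ A, linWeight x

lemma linMass_insert {a : Fin S} {A : Finset (Fin S)} (ha : a ∉ A) :
    linMass (insert a A) = linMass A + (a.val + 1) := by
  rw [linMass, sum_insert ha, add_comm, linMass, linWeight]

lemma linMass_pos {A : Finset (Fin S)} (hA : A.Nonempty) : 0 < linMass A :=
  sum_pos (fun x _ => by rw [linWeight]; positivity) hA

lemma sum_eq_linMass {π : Fin S → ℝ} (hπ : ∀ x, π x = 2 * linWeight x / (S * (S + 1)))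
    (A : Finset (Fin S)) : ∑ x ∈ A, π x = 2 * linMass A / (S * (S + 1)) := by
  rw [linMass, mul_sum, sum_div]
  exact sum_congr rfl fun x _ => hπ x

lemma filter_val_lt_succ {j : ℕ} (hj : j < S) :
    univ.filter (fun x : Fin S => x.val < j + 1) =
      insert ⟨j, hj⟩ (univ.filter (fun x : Fin S => x.val < j)) := by
  ext x
  simp only [Order.lt_add_one_iff, mem_filter, mem_univ, true_and, mem_insert, Fin.ext_iff]
  omega

lemma linMass_filter_val_lt {j : ℕ} (hj : j ≤ S) :
    linMass (univ.filter (fun x : Fin S => x.val < j)) = j * (j + 1) / 2 := by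
  induction j with
  | zero => simp [linMass]
  | succ j ih =>
    rw [filter_val_lt_succ hj, linMass_insert (by simp), ih (by omega)]
    push_cast
    ring

lemma linMass_univ : linMass (univ : Finset (Fin S)) = S * (S + 1) / 2 := by
  simpa using linMass_filter_val_lt (S := S) le_rfl

variable [NeZero S]

def cycleCut (c : Fin S → ℝ) (A : Finset (Fin S)) : ℝ :=
  ∑ x, if (x ∈ A ↔ x + 1 ∈ A) then 0 else c x

lemma cycleCut_nonneg {c : Fin S → ℝ} (hc : ∀ x, 0 ≤ c x) (A : Finset (Fin S)) :
    0 ≤ cycleCut c A :=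
  sum_nonneg fun x _ => by split_ifs <;> simp [hc x]

lemma cycleCut_compl (c : Fin S → ℝ) (A : Finset (Fin S)) : cycleCut c Aᶜ = cycleCut c A := by
  simp only [cycleCut, mem_compl, not_iff_not]

lemma cycleCut_div (c : Fin S → ℝ) (d : ℝ) (A : Finset (Fin S)) :
    cycleCut (fun x => c x / d) A = cycleCut c A / d := by
  rw [cycleCut, cycleCut, sum_div]
  exact sum_congr rfl fun x _ => by split_ifs <;> simp

lemma cycleCut_insert (hS : 1 < S) (c : Fin S → ℝ) {a : Fin S} {A : Finset (Fin S)}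
    (ha : a ∉ A) (ha' : a + 1 ∉ A) :
    cycleCut c (insert a A) =
      cycleCut c A + c a + if a - 1 ∈ A then -c (a - 1) else c (a - 1) := by
  have hne : a + 1 ≠ a := by simp only [ne_eq, add_eq_left, Fin.one_eq_zero_iff]; omega
  have hne' : a - 1 ≠ a := by simp only [ne_eq, sub_eq_self, Fin.one_eq_zero_iff]; omega
  rw [add_assoc, ← sub_eq_iff_eq_add', cycleCut, cycleCut, ← sum_sub_distrib,
    Fintype.sum_eq_add a (a - 1) hne'.symm]
  · by_cases h : a - 1 ∈ A <;> simp [h, ha, ha', hne, hne']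
  · rintro x ⟨hxa, hxa'⟩
    have hx1 : x + 1 ≠ a := fun h => hxa' (eq_sub_of_add_eq h)
    simp [hxa, hx1]

lemma add_one_ne_sub_one (hS : 3 ≤ S) (x : Fin S) : x + 1 ≠ x - 1 := by
  intro h
  have h2 := congrArg (fun y => (y - x + 1).val) h
  simp only [add_sub_cancel_left, sub_sub_cancel_left, neg_add_cancel, Fin.val_zero, Fin.val_add,
    Fin.val_one', Nat.mod_eq_of_lt (by omega : 1 < S)] at h2
  rw [Nat.mod_eq_of_lt (by omega)] at h2
  omega

lemma sum_mul_sum_compl_eq_cycleCut (hS : 3 ≤ S) {π : Fin S → ℝ} (hπ : ∀ x, 0 < π x)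
    {P : Matrix (Fin S) (Fin S) ℝ}
    (hP : ∀ x y, x ≠ y →
      P x y = (if y = x + 1 ∨ y = x - 1 then (1 : ℝ) / 2 else 0) * min 1 (π y / π x))
    (A : Finset (Fin S)) :
    ∑ x ∈ A, π x * ∑ y ∈ Aᶜ, P x y = cycleCut (fun x => min (π x) (π (x + 1)) / 2) A := by
  set e : Fin S → ℝ := fun x => min (π x) (π (x + 1)) / 2
  have hpair : ∀ x y, x ≠ y → π x * P x y =
      (if y = x + 1 then e x else 0) + if y = x - 1 then e (x - 1) else 0 := by
    intro x y hxy
    have hmin : π x * ((1 : ℝ) / 2 * min 1 (π y / π x)) = min (π x) (π y) / 2 := by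
      rw [mul_left_comm, mul_min_of_nonneg _ _ (hπ x).le, mul_one,
        mul_div_cancel₀ _ (hπ x).ne']
      ring
    rw [hP x y hxy, ite_mul, zero_mul, mul_ite, mul_zero, hmin]
    by_cases h1 : y = x + 1
    · simp [h1, add_one_ne_sub_one hS, e]
    by_cases h2 : y = x - 1
    · simp [h2, (add_one_ne_sub_one hS x).symm, e, min_comm]
    · simp [h1, h2]
  have hrow : ∀ x ∈ A, π x * ∑ y ∈ Aᶜ, P x y =
      (if x + 1 ∈ A then 0 else e x) + if x - 1 ∈ A then 0 else e (x - 1) := by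
    intro x hx
    rw [mul_sum, sum_congr rfl fun y hy => hpair x y (by rintro rfl; simp_all),
      sum_add_distrib, sum_ite_eq', sum_ite_eq']
    simp only [mem_compl, ite_not]
  rw [sum_congr rfl hrow, sum_add_distrib, ← Fintype.sum_ite_mem A, ← Fintype.sum_ite_mem A,
    ← Equiv.sum_comp (Equiv.addRight 1)
      (fun x => if x ∈ A then if x - 1 ∈ A then 0 else e (x - 1) else 0), ← sum_add_distrib]
  refine sum_congr rfl fun x _ => ?_
  simp only [Equiv.coe_addRight, add_sub_cancel_right]
  by_cases hx : x ∈ A <;> by_cases hx' : x + 1 ∈ A <;> simp [hx, hx']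

def linEdgeWeight (x : Fin S) : ℝ := min (linWeight x) (linWeight (x + 1))

lemma linEdgeWeight_of_lt {x : Fin S} (h : x.val + 1 < S) : linEdgeWeight x = x.val + 1 := by
  rw [linEdgeWeight, linWeight, linWeight, Fin.val_add_one_of_lt' h]
  push_cast
  exact min_eq_left (by linarith)

lemma linEdgeWeight_of_eq {x : Fin S} (h : x.val + 1 = S) : linEdgeWeight x = 1 := by
  have hx : (x + 1).val = 0 := by
    rw [Fin.val_add, Fin.val_one', Nat.add_mod_mod, h, Nat.mod_self]
  rw [linEdgeWeight, linWeight, linWeight, hx, Nat.cast_zero, zero_add]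
  exact min_eq_right (by simp)

lemma one_le_linEdgeWeight (x : Fin S) : 1 ≤ linEdgeWeight x :=
  le_min (by simp [linWeight]) (by simp [linWeight])

lemma cycleCut_linEdgeWeight_nonneg (A : Finset (Fin S)) : 0 ≤ cycleCut linEdgeWeight A :=
  cycleCut_nonneg (fun x => zero_le_one.trans (one_le_linEdgeWeight x)) A

lemma linEdgeWeight_sub_one {a : Fin S} (ha : a ≠ 0) : linEdgeWeight (a - 1) = a.val := by
  have h := Fin.val_sub_one_of_ne_zero ha
  have h0 : a.val ≠ 0 := Fin.val_ne_zero_iff.mpr ha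
  rw [linEdgeWeight_of_lt (by omega), h]
  push_cast [Nat.one_le_iff_ne_zero.mpr h0]
  ring

lemma two_mul_linMass_le_of_forall_val_lt (hS : 1 < S) (A : Finset (Fin S))
    (hA : ∀ x ∈ A, x.val + 1 < S) :
    2 * linMass A ≤ cycleCut linEdgeWeight A * (cycleCut linEdgeWeight A - 1) ∧
      ∀ x ∈ A, (x.val : ℝ) + 2 ≤ cycleCut linEdgeWeight A := by
  induction A using Finset.induction_on_max with
  | empty => simp [linMass, cycleCut]
  | insert a A hlt ih =>
    obtain ⟨hmass, hbound⟩ := ih fun x hx => hA x (mem_insert_of_mem hx)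
    have haS : a.val + 1 < S := hA a (mem_insert_self a A)
    have ha : a ∉ A := fun h => lt_irrefl a (hlt a h)
    have ha' : a + 1 ∉ A := fun h => by
      have := hlt _ h
      rw [Fin.lt_def, Fin.val_add_one_of_lt' haS] at this
      omega
    have hF0 := cycleCut_linEdgeWeight_nonneg A
    rw [cycleCut_insert hS _ ha ha', linMass_insert ha, linEdgeWeight_of_lt haS]
    split_ifs with hprev
    · have ha0 : a ≠ 0 := by
        rintro rfl
        exact absurd (hlt _ hprev) (Fin.not_lt_zero _)
      have hprevF := hbound _ hprev
      rw [Fin.val_sub_one_of_ne_zero ha0, Nat.cast_sub (Nat.one_le_iff_ne_zero.mpr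
        (Fin.val_ne_zero_iff.mpr ha0)), Nat.cast_one] at hprevF
      rw [linEdgeWeight_sub_one ha0]
      -- the cut grows by exactly one, so the new state must be paid for by `hprevF`
      exact ⟨by nlinarith, forall_mem_insert _ _ _ |>.mpr
        ⟨by linarith, fun x hx => by linarith [hbound x hx]⟩⟩
    · have := one_le_linEdgeWeight (a - 1)
      exact ⟨by nlinarith, forall_mem_insert _ _ _ |>.mpr
        ⟨by linarith, fun x hx => by linarith [hbound x hx]⟩⟩

lemma two_mul_linMass_le (hS : 1 < S) {A : Finset (Fin S)}
    (hA : 2 * linMass A < linMass (univ : Finset (Fin S))) :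
    2 * linMass A ≤ cycleCut linEdgeWeight A * (cycleCut linEdgeWeight A - 1) := by
  by_cases hlast : ∀ x ∈ A, x.val + 1 < S
  · exact (two_mul_linMass_le_of_forall_val_lt hS A hlast).1
  simp only [not_forall, not_lt] at hlast
  obtain ⟨z, hzA, hz⟩ := hlast
  have hcompl : ∀ x ∈ Aᶜ, x.val + 1 < S := fun x hx => by
    have : x ≠ z := fun h => mem_compl.mp hx (h ▸ hzA)
    have : x.val ≠ z.val := Fin.val_ne_of_ne this
    omega
  have hsplit : linMass A + linMass Aᶜ = linMass univ := sum_add_sum_compl A _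
  have := (two_mul_linMass_le_of_forall_val_lt hS Aᶜ hcompl).1
  rw [cycleCut_compl] at this
  linarith

lemma cycleCut_filter_val_lt (hS : 1 < S) {j : ℕ} (hj : 1 ≤ j) (hjS : j < S) :
    cycleCut linEdgeWeight (univ.filter (fun x : Fin S => x.val < j)) = j + 1 := by
  induction j, hj using Nat.le_induction with
  | base =>
    have hlast : ((⟨0, by omega⟩ : Fin S) - 1).val + 1 = S := by
      rw [Fin.sub_def]
      simp only [Fin.coe_ofNat_eq_mod, Nat.mod_eq_of_lt hS, add_zero, Nat.self_sub_mod]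
      omega
    rw [filter_val_lt_succ (by omega), cycleCut_insert hS _ (by simp) (by simp),
      linEdgeWeight_of_lt (by simpa using hS), if_neg (by simp), linEdgeWeight_of_eq hlast]
    simp [cycleCut]
  | succ j hj ih =>
    have hj0 : (⟨j, by omega⟩ : Fin S) ≠ 0 := by
      simp only [ne_eq, Fin.ext_iff, Fin.coe_ofNat_eq_mod, Nat.zero_mod]; omega
    have hj1 : ((⟨j, by omega⟩ : Fin S) + 1).val = j + 1 := Fin.val_add_one_of_lt' hjS
    have hprev : (⟨j, by omega⟩ - 1 : Fin S) ∈ univ.filter (fun x : Fin S => x.val < j) := by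
      simpa [Fin.val_sub_one_of_ne_zero hj0] using Nat.lt_of_succ_le hj
    rw [filter_val_lt_succ (by omega), cycleCut_insert hS _ (by simp) (by simp [hj1]),
      ih (by omega), linEdgeWeight_of_lt (by simpa using hjS), if_pos hprev,
      linEdgeWeight_sub_one hj0]
    push_cast
    ring

lemma one_add_sqrt_div_le_cycleCut_div (hS : 1 < S) {A : Finset (Fin S)} (hA : A.Nonempty)
    (hhalf : 4 * linMass A < S * (S + 1)) :
    (1 + √(1 + 2 * S * (S + 1))) / (S * (S + 1)) ≤
      cycleCut linEdgeWeight A / (2 * linMass A) := by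
  have hW := two_mul_linMass_le hS (A := A) (by rw [linMass_univ]; linarith)
  rw [mul_assoc]
  exact one_add_sqrt_div_le_div (by positivity) (cycleCut_linEdgeWeight_nonneg A)
    (by linarith [linMass_pos hA]) hW (by linarith)

lemma sum_mul_sum_compl_eq_cycleCut_linEdgeWeight (hS : 3 ≤ S) {π : Fin S → ℝ}
    (hπ : ∀ x, π x = 2 * linWeight x / (S * (S + 1))) {P : Matrix (Fin S) (Fin S) ℝ}
    (hP : ∀ x y, x ≠ y →
      P x y = (if y = x + 1 ∨ y = x - 1 then (1 : ℝ) / 2 else 0) * min 1 (π y / π x))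
    (A : Finset (Fin S)) :
    ∑ x ∈ A, π x * ∑ y ∈ Aᶜ, P x y = cycleCut linEdgeWeight A / (S * (S + 1)) := by
  have hN : (0 : ℝ) < S * (S + 1) := by positivity
  rw [sum_mul_sum_compl_eq_cycleCut hS (fun x => by rw [hπ, linWeight]; positivity) hP,
    ← cycleCut_div]
  congr 1
  funext x
  rw [hπ, hπ, min_div_div_right hN.le, ← mul_min_of_nonneg _ _ zero_le_two, linEdgeWeight]
  ring

end MHCycle

open MHCycle in
theorem mh_linear_cycle_conductance_general (S : ℕ) (hS : 5 ≤ S) (hodd : S % 2 = 1)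
    [NeZero S]
    (pi : Fin S → ℝ)
    (hpi : ∀ k : Fin S, pi k = 2 * ((k.val : ℝ) + 1) / ((S : ℝ) * ((S : ℝ) + 1)))
    (P : Matrix (Fin S) (Fin S) ℝ)
    (hP : ∀ x y : Fin S, x ≠ y →
      P x y = (if y = x + 1 ∨ y = x - 1 then (1 : ℝ) / 2 else 0) *
        min 1 (pi y / pi x)) :
    (1 + Real.sqrt (1 + 2 * (S : ℝ) * ((S : ℝ) + 1))) / ((S : ℝ) * ((S : ℝ) + 1)) ≤
      sInf {r : ℝ | ∃ A : Finset (Fin S), A.Nonempty ∧ (∑ x ∈ A, pi x) < 1 / 2 ∧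
        r = (∑ x ∈ A, pi x * ∑ y ∈ Aᶜ, P x y) / ∑ x ∈ A, pi x} ∧
    sInf {r : ℝ | ∃ A : Finset (Fin S), A.Nonempty ∧ (∑ x ∈ A, pi x) < 1 / 2 ∧
        r = (∑ x ∈ A, pi x * ∑ y ∈ Aᶜ, P x y) / ∑ x ∈ A, pi x} ≤
      2 / ((S : ℝ) + 1) := by
  have hπ (x : Fin S) : pi x = 2 * linWeight x / (S * (S + 1)) := hpi x
  have hN : (0 : ℝ) < S * (S + 1) := by positivity
  have hhalf (A : Finset (Fin S)) : ∑ x ∈ A, pi x < 1 / 2 ↔ 4 * linMass A < S * (S + 1) := by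
    rw [sum_eq_linMass hπ, div_lt_iff₀ hN]
    constructor <;> intro h <;> linarith
  have hratio (A : Finset (Fin S)) : (∑ x ∈ A, pi x * ∑ y ∈ Aᶜ, P x y) / ∑ x ∈ A, pi x =
      cycleCut linEdgeWeight A / (2 * linMass A) := by
    rw [sum_mul_sum_compl_eq_cycleCut_linEdgeWeight (by omega) hπ hP, sum_eq_linMass hπ,
      div_div_div_cancel_right₀ hN.ne']
  obtain ⟨m, hm⟩ : ∃ m, S + 1 = 2 * m := ⟨(S + 1) / 2, by omega⟩
  have hmR : (S : ℝ) + 1 = 2 * m := by exact_mod_cast hm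
  have hS5 : (5 : ℝ) ≤ S := by exact_mod_cast hS
  refine le_sInf_and_sInf_le (fun A hA hA' => ?_) (i₀ := univ.filter (fun x : Fin S => x.val < m))
    ⟨⟨0, by omega⟩, by simpa using (by omega : 0 < m)⟩ ?_ ?_
  · rw [hratio]
    exact one_add_sqrt_div_le_cycleCut_div (by omega) hA ((hhalf A).mp hA')
  · rw [hhalf, linMass_filter_val_lt (by omega)]
    nlinarith
  · rw [hratio, linMass_filter_val_lt (by omega),
      cycleCut_filter_val_lt (by omega) (by omega) (by omega), hmR]
    exact le_of_eq (by field_simp)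

/-- conductance bounds for the nearest-neighbour MH chain on the
cycle {1,…,S} (S odd, S ≥ 5) with target π(k) = 2k/(S(S+1)):
(1 + √(1 + 2S(S+1)))/(S(S+1)) ≤ h(P) ≤ 2/(S+1), where h(P) is the infimum of
(Σ_{x∈A} π(x)P(x,Aᶜ))/π(A) over nonempty sets A with π(A) < 1/2.
States are encoded by `x : Fin S` with `x.val = k − 1`. -/
theorem mh_linear_cycle_conductance (S : ℕ) (hS : 5 ≤ S) (hodd : S % 2 = 1)
    [NeZero S]
    (pi : Fin S → ℝ)
    (hpi : ∀ k : Fin S, pi k = 2 * ((k.val : ℝ) + 1) / ((S : ℝ) * ((S : ℝ) + 1)))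
    (P : Matrix (Fin S) (Fin S) ℝ)
    (hP : ∀ x y : Fin S, x ≠ y →
      P x y = (if y = x + 1 ∨ y = x - 1 then (1 : ℝ) / 2 else 0) *
        min 1 (pi y / pi x))
    (hPdiag : ∀ x : Fin S, P x x = 1 - ∑ y ∈ Finset.univ.filter (· ≠ x), P x y) :
    (1 + Real.sqrt (1 + 2 * (S : ℝ) * ((S : ℝ) + 1))) / ((S : ℝ) * ((S : ℝ) + 1)) ≤
      sInf {r : ℝ | ∃ A : Finset (Fin S), A.Nonempty ∧ (∑ x ∈ A, pi x) < 1 / 2 ∧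
        r = (∑ x ∈ A, pi x * ∑ y ∈ Aᶜ, P x y) / ∑ x ∈ A, pi x} ∧
    sInf {r : ℝ | ∃ A : Finset (Fin S), A.Nonempty ∧ (∑ x ∈ A, pi x) < 1 / 2 ∧
        r = (∑ x ∈ A, pi x * ∑ y ∈ Aᶜ, P x y) / ∑ x ∈ A, pi x} ≤
      2 / ((S : ℝ) + 1) :=
  mh_linear_cycle_conductance_general S hS hodd pi hpi P hP
end
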